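/- arXiv:quant-ph/0406046 — 2 statements merged into one kernel-verified Lean document; each statement's English description precedes it below -/
import Mathlib

section
/- Let G be a finite group and H ≤ G a subgroup. Then D_H ≤ Σ_{h ∈ H, h ≠ e} |h^G|^{-1/2}, where h^G denotes the conjugacy class of h in G. -/
open CategoryTheory Finset
open scoped Classical

/-- `D_H`: the total variation distance between the weak quantum Fourier sampling
distributions for the hidden subgroup `H` and for the trivial subgroup, namely
`(1/|G|) · Σ_ρ d_ρ · |Σ_{h ∈ H, h ≠ e} χ_ρ(h)|`, where `ρ` runs over the family
of irreducible representations. -/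
noncomputable def weakDist {G : Type} [Group G] [Fintype G] {ι : Type} [Fintype ι]
    (ρ : ι → FDRep ℂ G) (H : Subgroup G) : ℝ :=
  (Fintype.card G : ℝ)⁻¹ *
    ∑ i : ι, (Module.finrank ℂ (ρ i) : ℝ) *
      ‖∑ h ∈ Finset.univ.filter (fun h : G => h ∈ H ∧ h ≠ 1), (ρ i).character h‖

/-- `ρ : ι → FDRep ℂ G` is a complete family of pairwise non-isomorphic irreducible
complex representations of `G` (one per isomorphism class). -/
def IsCompleteIrrepFamily {G : Type} [Group G] {ι : Type} (ρ : ι → FDRep ℂ G) : Prop :=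
  (∀ i, Simple (ρ i)) ∧
  (∀ i j, Nonempty (ρ i ≅ ρ j) → i = j) ∧
  (∀ V : FDRep ℂ G, Simple V → ∃ i, Nonempty (ρ i ≅ V))

/-!
Irreducible characters are orthonormal in `ℓ²(G)` (this needs `χ(g⁻¹) = conj χ(g)`), so Bessel's
inequality against the indicator of the conjugacy class of `h` gives
`∑_ρ |χ_ρ(h)|² ≤ |G| / |h^G|`; at `h = 1` this reads `∑_ρ d_ρ² ≤ |G|`. Cauchy–Schwarz then bounds
`∑_ρ d_ρ |χ_ρ(h)|` by `|G| · |h^G|^{-1/2}`, and the triangle inequality in `h` finishes.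
-/
open scoped ComplexOrder InnerProductSpace

namespace Matrix

variable {G : Type*} [Group G] [Fintype G] {n : Type*} [Fintype n] [DecidableEq n]

lemma posDef_sum_conjTranspose_mul_self (M : G →* Matrix n n ℂ) :
    (∑ t : G, (M t)ᴴ * M t).PosDef := by
  rw [← Finset.add_sum_erase _ _ (Finset.mem_univ 1), map_one, conjTranspose_one, one_mul]
  exact PosDef.one.add_posSemidef <|
    Finset.sum_induction _ _ (fun _ _ => PosSemidef.add) PosSemidef.zero
      fun t _ => posSemidef_conjTranspose_mul_self (M t)

lemma conjTranspose_mul_sum_conjTranspose_mul_self_mul (M : G →* Matrix n n ℂ) (g : G) :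
    (M g)ᴴ * (∑ t : G, (M t)ᴴ * M t) * M g = ∑ t : G, (M t)ᴴ * M t := by
  rw [Finset.mul_sum, Finset.sum_mul]
  exact Fintype.sum_equiv (Equiv.mulRight g) _ _ fun t => by
    simp [conjTranspose_mul, Matrix.mul_assoc]

/-- Averaging `(M t)ᴴ * M t` over the group gives an invariant positive definite form `P`, so
`M g⁻¹ = P⁻¹ * (M g)ᴴ * P` is similar to `(M g)ᴴ`. -/
lemma trace_map_inv (M : G →* Matrix n n ℂ) (g : G) :
    (M g⁻¹).trace = star (M g).trace := by
  set P := ∑ t : G, (M t)ᴴ * M t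
  have hP : IsUnit P := (posDef_sum_conjTranspose_mul_self M).isUnit
  have hinv : M g⁻¹ = P⁻¹ * (M g)ᴴ * P := by
    rw [← inv_eq_left_inv (map_mul_eq_one M (inv_mul_cancel g))]
    refine inv_eq_left_inv ?_
    rw [Matrix.mul_assoc, Matrix.mul_assoc, ← Matrix.mul_assoc _ P,
      conjTranspose_mul_sum_conjTranspose_mul_self_mul,
      nonsing_inv_mul _ ((isUnit_iff_isUnit_det P).mp hP)]
  rw [hinv, trace_conj' hP, trace_conjTranspose]

end Matrix

lemma ConjClasses.card_carrier_mk_pos {G : Type*} [Group G] [Finite G] (h : G) :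
    0 < Nat.card (ConjClasses.mk h).carrier :=
  have : Nonempty (ConjClasses.mk h).carrier := ⟨⟨h, ConjClasses.mem_carrier_mk⟩⟩
  Nat.card_pos

namespace FDRep

lemma char_eq_of_isConj {k G : Type*} [Field k] [Group G] (V : FDRep k G) {g h : G}
    (hgh : IsConj g h) : V.character g = V.character h := by
  obtain ⟨c, rfl⟩ := isConj_iff.mp hgh
  exact (char_conj V g c).symm

variable {G : Type} [Group G] [Fintype G]

lemma char_inv (V : FDRep ℂ G) (g : G) : V.character g⁻¹ = starRingEnd ℂ (V.character g) := by
  let b := Module.finBasis ℂ V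
  let M : G →* Matrix (Fin (Module.finrank ℂ V)) (Fin (Module.finrank ℂ V)) ℂ :=
    (LinearMap.toMatrixAlgEquiv b : (V →ₗ[ℂ] V) →* _).comp V.ρ
  have hM (h : G) : V.character h = (M h).trace := LinearMap.trace_eq_matrix_trace ℂ b _
  rw [hM, hM, Matrix.trace_map_inv, Complex.star_def]

noncomputable def normalizedCharacter (V : FDRep ℂ G) : EuclideanSpace ℂ G :=
  WithLp.toLp 2 fun g => (√(Nat.card G : ℝ) : ℂ)⁻¹ * V.character g

lemma inner_normalizedCharacter (V : FDRep ℂ G) (x : EuclideanSpace ℂ G) :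
    ⟪V.normalizedCharacter, x⟫_ℂ =
      (√(Nat.card G : ℝ) : ℂ)⁻¹ * ∑ g, starRingEnd ℂ (V.character g) * x g := by
  simp only [PiLp.inner_apply, RCLike.inner_apply, normalizedCharacter, Finset.mul_sum]
  refine Finset.sum_congr rfl fun g _ => ?_
  simp only [map_mul, map_inv₀, Complex.conj_ofReal]
  ring

lemma inner_normalizedCharacter_normalizedCharacter (V W : FDRep ℂ G) [Simple V] [Simple W] :
    ⟪V.normalizedCharacter, W.normalizedCharacter⟫_ℂ = if Nonempty (W ≅ V) then 1 else 0 := by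
  have : Invertible (Nat.card G : ℂ) := invertibleOfNonzero (by simp)
  rw [inner_normalizedCharacter, ← char_orthonormal W V]
  have hsqrt : (√(Nat.card G : ℝ) : ℂ)⁻¹ * (√(Nat.card G : ℝ) : ℂ)⁻¹ = (Nat.card G : ℂ)⁻¹ := by
    rw [← mul_inv, ← Complex.ofReal_mul, Real.mul_self_sqrt (Nat.cast_nonneg _)]
    simp
  simp only [normalizedCharacter, PiLp.toLp_apply, Finset.mul_sum, ← hsqrt, ← char_inv]
  exact Finset.sum_congr rfl fun g _ => by ring

lemma orthonormal_normalizedCharacter {ι : Type*} (ρ : ι → FDRep ℂ G) [∀ i, Simple (ρ i)]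
    (hρ : ∀ i j, Nonempty (ρ i ≅ ρ j) → i = j) :
    Orthonormal ℂ fun i => (ρ i).normalizedCharacter := by
  rw [orthonormal_iff_ite]
  intro i j
  rw [inner_normalizedCharacter_normalizedCharacter]
  exact if_congr ⟨fun h => (hρ j i h).symm, fun h => h ▸ ⟨Iso.refl _⟩⟩ rfl rfl

lemma sum_norm_char_sq_le {ι : Type*} [Fintype ι] (ρ : ι → FDRep ℂ G) [∀ i, Simple (ρ i)]
    (hρ : ∀ i j, Nonempty (ρ i ≅ ρ j) → i = j) (h : G) :
    ∑ i, ‖(ρ i).character h‖ ^ 2 ≤ Nat.card G / Nat.card (ConjClasses.mk h).carrier := by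
  set C := (ConjClasses.mk h).carrier
  let x : EuclideanSpace ℂ G := WithLp.toLp 2 fun g => if g ∈ C then 1 else 0
  have hcard : (Finset.univ.filter (· ∈ C)).card = Nat.card C := by
    rw [Set.filter_mem_univ_eq_toFinset, Set.toFinset_card, Nat.card_eq_fintype_card]
  have hx : ‖x‖ ^ 2 = Nat.card C := by
    rw [EuclideanSpace.norm_sq_eq]
    simp [x, apply_ite, hcard]
  have hinner (i : ι) : ‖⟪(ρ i).normalizedCharacter, x⟫_ℂ‖ =
      (√(Nat.card G : ℝ))⁻¹ * Nat.card C * ‖(ρ i).character h‖ := by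
    have hsum : ∑ g, starRingEnd ℂ ((ρ i).character g) * x g =
        Nat.card C * starRingEnd ℂ ((ρ i).character h) := by
      simp only [x, mul_ite, mul_one, mul_zero]
      rw [← Finset.sum_filter, ← hcard, ← nsmul_eq_mul, ← Finset.sum_const]
      refine Finset.sum_congr rfl fun g hg => congrArg _ (char_eq_of_isConj _ ?_)
      exact ConjClasses.mk_eq_mk_iff_isConj.mp
        (ConjClasses.mem_carrier_iff_mk_eq.mp (Finset.mem_filter.mp hg).2)
    rw [inner_normalizedCharacter, hsum]
    simp [mul_assoc]
  have hbessel := (orthonormal_normalizedCharacter ρ hρ).sum_inner_products_le x (s := .univ)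
  simp only [hinner, hx, mul_pow, inv_pow, Real.sq_sqrt (Nat.cast_nonneg _), ← Finset.mul_sum]
    at hbessel
  have hG : (0 : ℝ) < Nat.card G := by exact_mod_cast Nat.card_pos
  have hC : (0 : ℝ) < Nat.card C := mod_cast ConjClasses.card_carrier_mk_pos h
  rw [le_div_iff₀ hC]
  refine le_of_mul_le_mul_left ?_ hC
  calc (Nat.card C : ℝ) * ((∑ i, ‖(ρ i).character h‖ ^ 2) * Nat.card C)
      = Nat.card G * ((Nat.card G : ℝ)⁻¹ * Nat.card C ^ 2 * ∑ i, ‖(ρ i).character h‖ ^ 2) := by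
        field_simp
    _ ≤ Nat.card C * Nat.card G :=
        (mul_le_mul_of_nonneg_left hbessel hG.le).trans_eq (mul_comm _ _)

lemma sum_finrank_sq_le {ι : Type*} [Fintype ι] (ρ : ι → FDRep ℂ G) [∀ i, Simple (ρ i)]
    (hρ : ∀ i j, Nonempty (ρ i ≅ ρ j) → i = j) :
    ∑ i, (Module.finrank ℂ (ρ i) : ℝ) ^ 2 ≤ Nat.card G := by
  have hone : (ConjClasses.mk (1 : G)).carrier = {1} := Set.ext fun g => by
    simp [ConjClasses.mem_carrier_iff_mk_eq, ConjClasses.mk_eq_mk_iff_isConj]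
  simpa [hone] using sum_norm_char_sq_le ρ hρ 1

lemma card_inv_mul_sum_finrank_mul_norm_char_le {ι : Type*} [Fintype ι] (ρ : ι → FDRep ℂ G)
    [∀ i, Simple (ρ i)] (hρ : ∀ i j, Nonempty (ρ i ≅ ρ j) → i = j) (h : G) :
    (Nat.card G : ℝ)⁻¹ * ∑ i, (Module.finrank ℂ (ρ i) : ℝ) * ‖(ρ i).character h‖ ≤
      (Nat.card (ConjClasses.mk h).carrier : ℝ) ^ (-(1 / 2 : ℝ)) := by
  have hG : (0 : ℝ) < Nat.card G := by exact_mod_cast Nat.card_pos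
  have hC : (0 : ℝ) < Nat.card (ConjClasses.mk h).carrier :=
    mod_cast ConjClasses.card_carrier_mk_pos h
  calc (Nat.card G : ℝ)⁻¹ * ∑ i, (Module.finrank ℂ (ρ i) : ℝ) * ‖(ρ i).character h‖
      ≤ (Nat.card G : ℝ)⁻¹ * (√(∑ i, (Module.finrank ℂ (ρ i) : ℝ) ^ 2) *
          √(∑ i, ‖(ρ i).character h‖ ^ 2)) := by
        gcongr
        exact Real.sum_mul_le_sqrt_mul_sqrt _ _ _
    _ ≤ (Nat.card G : ℝ)⁻¹ * (√(Nat.card G) *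
          √(Nat.card G / Nat.card (ConjClasses.mk h).carrier)) := by
        gcongr
        exacts [sum_finrank_sq_le ρ hρ, sum_norm_char_sq_le ρ hρ h]
    _ = (Nat.card (ConjClasses.mk h).carrier : ℝ) ^ (-(1 / 2 : ℝ)) := by
        rw [Real.rpow_neg hC.le, ← Real.sqrt_eq_rpow, Real.sqrt_div' _ hC.le, ← mul_div_assoc,
          Real.mul_self_sqrt hG.le]
        field_simp

end FDRep

/-- `D_H ≤ Σ_{h ∈ H, h ≠ e} |h^G|^{-1/2}`. -/
theorem stmt_10 {G : Type} [Group G] [Fintype G] {ι : Type} [Fintype ι]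
    (ρ : ι → FDRep ℂ G) (hρ : IsCompleteIrrepFamily ρ) (H : Subgroup G) :
    weakDist ρ H ≤
      ∑ h ∈ Finset.univ.filter (fun h : G => h ∈ H ∧ h ≠ 1),
        (Nat.card (ConjClasses.mk h).carrier : ℝ) ^ (-(1 / 2 : ℝ)) := by
  obtain ⟨hsimple, hinj, -⟩ := hρ
  calc weakDist ρ H
      ≤ (Nat.card G : ℝ)⁻¹ * ∑ i, (Module.finrank ℂ (ρ i) : ℝ) *
          ∑ h ∈ Finset.univ.filter (fun h : G => h ∈ H ∧ h ≠ 1), ‖(ρ i).character h‖ := by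
        rw [weakDist, Nat.card_eq_fintype_card]
        gcongr
        exact norm_sum_le _ _
    _ = ∑ h ∈ Finset.univ.filter (fun h : G => h ∈ H ∧ h ≠ 1),
          (Nat.card G : ℝ)⁻¹ * ∑ i, (Module.finrank ℂ (ρ i) : ℝ) * ‖(ρ i).character h‖ := by
        simp_rw [Finset.mul_sum]
        exact Finset.sum_comm
    _ ≤ _ := Finset.sum_le_sum fun h _ =>
        FDRep.card_inv_mul_sum_finrank_mul_norm_char_le ρ hinj h
end

section
/- Let H ≤ S_n be a nontrivial subgroup with minimal degree m = m(H), and let c > 0 be a real number with n^c ≥ 2. Suppose that (a) every non-identity h ∈ H satisfies |h^{S_n}| ≥ n^{2(c + 1/7)·supp(h)}, and (b) for every k, the number of elements h ∈ H with supp(h) = k is at most n^{k/7}. Then D_H ≤ 2 · n^{-c·m}. -/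
/-!
By the triangle inequality, `D_H ≤ |G|⁻¹ ∑_{h ∈ H, h ≠ 1} ∑_ρ d_ρ |χ_ρ(h)|`. By Cauchy–Schwarz,
`∑_ρ d_ρ |χ_ρ(h)| ≤ (∑_ρ d_ρ²)^{1/2} (∑_ρ |χ_ρ(h)|²)^{1/2} ≤ |G| / √|h^G|`, both factors being
bounded by Bessel's inequality for the orthonormal characters in `ℂ^G` against the indicator of the
conjugacy class of `1`, resp. `h` (the inequality half of column orthogonality). Hypothesis (a)
turns `1 / √|h^G|` into `n^{-(c + 1/7) supp h}`; grouping by support and using (b), the sum is at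
most `∑_{k ≥ m} n^{-ck}`, a geometric series of ratio `n^{-c} ≤ 1/2`.

Orthonormality in `ℂ^G` needs `χ(g⁻¹) = conj χ(g)`: `ρ(g)` is diagonalisable with roots of unity
as eigenvalues, since it is annihilated by the separable polynomial `X^{ord g} - 1`.
-/

open CategoryTheory Finset
open scoped Classical

namespace Module.End

variable {K V : Type*} [Field K] [AddCommGroup V] [Module K V]

lemma pow_apply_of_mem_eigenspace {f : End K V} {μ : K} {x : V} (hx : x ∈ f.eigenspace μ)
    (j : ℕ) : (f ^ j) x = μ ^ j • x := by
  induction j <;> simp [*, pow_succ' f, mem_eigenspace_iff.mp hx, smul_smul, pow_succ μ]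

lemma pow_eq_one_of_hasEigenvalue {f : End K V} {k : ℕ} (hf : f ^ k = 1) {μ : K}
    (hμ : f.HasEigenvalue μ) : μ ^ k = 1 := by
  obtain ⟨v, hv⟩ := hμ.exists_hasEigenvector
  refine smul_left_injective K hv.2 ?_
  simpa [hf] using (hv.pow_apply k).symm

lemma isSemisimple_of_pow_eq_one [CharZero K] {f : End K V} {k : ℕ}
    (hk : k ≠ 0) (hf : f ^ k = 1) : f.IsSemisimple :=
  isSemisimple_of_squarefree_aeval_eq_zero
    (Polynomial.separable_X_pow_sub_C 1 (Nat.cast_ne_zero.mpr hk) one_ne_zero).squarefree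
    (by simp [hf])

theorem trace_pow_eq_sum_of_iSup_eigenspace_eq_top [FiniteDimensional K V] {f : End K V}
    (hf : ⨆ μ, f.eigenspace μ = ⊤) {S : Finset K} (hS : ∀ μ, f.HasEigenvalue μ → μ ∈ S)
    (j : ℕ) :
    LinearMap.trace K V (f ^ j) = ∑ μ ∈ S, μ ^ j * finrank K (f.eigenspace μ) := by
  have hint : DirectSum.IsInternal f.eigenspace :=
    (DirectSum.isInternal_submodule_iff_iSupIndep_and_iSup_eq_top _).mpr
      ⟨f.eigenspaces_iSupIndep, hf⟩
  have hfin : {μ | f.eigenspace μ ≠ ⊥}.Finite := S.finite_toSet.subset fun μ hμ => hS μ hμ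
  have hmaps (μ : K) : Set.MapsTo (f ^ j) (f.eigenspace μ) (f.eigenspace μ) :=
    mapsTo_genEigenspace_of_comm ((Commute.refl f).pow_right j) μ 1
  have htrace (μ : K) :
      LinearMap.trace K _ ((f ^ j).restrict (hmaps μ)) = μ ^ j * finrank K (f.eigenspace μ) := by
    have : (f ^ j).restrict (hmaps μ) = μ ^ j • 1 := by
      ext ⟨x, hx⟩
      exact pow_apply_of_mem_eigenspace hx j
    simp [this]
  rw [LinearMap.trace_eq_sum_trace_restrict' hint hfin hmaps]
  refine sum_subset (fun μ hμ => hS μ (hfin.mem_toFinset.mp hμ)) (fun μ _ hμ => ?_) |>.trans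
    (sum_congr rfl fun μ _ => htrace μ)
  simp [htrace, Submodule.finrank_eq_zero.mpr (by simpa using hμ)]

theorem trace_pow_pred_eq_conj_trace {W : Type*} [AddCommGroup W] [Module ℂ W]
    [FiniteDimensional ℂ W] {f : End ℂ W} {k : ℕ}
    (hk : k ≠ 0) (hf : f ^ k = 1) :
    LinearMap.trace ℂ W (f ^ (k - 1)) = starRingEnd ℂ (LinearMap.trace ℂ W f) := by
  have hS (μ : ℂ) (hμ : f.HasEigenvalue μ) : μ ∈ Polynomial.nthRootsFinset k (1 : ℂ) :=
    (Polynomial.mem_nthRootsFinset (Nat.pos_of_ne_zero hk) 1).mpr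
      (pow_eq_one_of_hasEigenvalue hf hμ)
  have hdiag := (isSemisimple_of_pow_eq_one hk hf).iSup_eigenspace_eq_top
  have htrace := trace_pow_eq_sum_of_iSup_eigenspace_eq_top hdiag hS
  have htrace_one : LinearMap.trace ℂ W f =
      ∑ μ ∈ Polynomial.nthRootsFinset k (1 : ℂ), μ * finrank ℂ (f.eigenspace μ) := by
    simpa using htrace 1
  rw [htrace, htrace_one, map_sum]
  refine sum_congr rfl fun μ hμ => ?_
  have hμk : μ ^ k = 1 := (Polynomial.mem_nthRootsFinset (Nat.pos_of_ne_zero hk) 1).mp hμ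
  rw [map_mul, map_natCast,
    ← Complex.inv_eq_conj (Complex.norm_eq_one_of_pow_eq_one hμk hk),
    ← eq_inv_of_mul_eq_one_left (by rw [pow_sub_one_mul hk, hμk])]

end Module.End

theorem FDRep.char_inv_s17 {G : Type*} [Group G] [Finite G] (V : FDRep ℂ G) (g : G) :
    V.character g⁻¹ = starRingEnd ℂ (V.character g) := by
  have hk : orderOf g ≠ 0 := (orderOf_pos g).ne'
  have hinv : g⁻¹ = g ^ (orderOf g - 1) :=
    (eq_inv_of_mul_eq_one_left (by rw [pow_sub_one_mul hk, pow_orderOf_eq_one])).symm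
  have hf : V.ρ g ^ orderOf g = 1 := by rw [← map_pow, pow_orderOf_eq_one, map_one]
  rw [FDRep.character, FDRep.character, hinv, map_pow]
  exact Module.End.trace_pow_pred_eq_conj_trace hk hf

section CharacterBessel

variable {G : Type} [Group G] [Fintype G] {ι : Type} (ρ : ι → FDRep ℂ G)

noncomputable def charVector (i : ι) : EuclideanSpace ℂ G :=
  WithLp.toLp 2 fun g => (√(Fintype.card G : ℝ) : ℂ)⁻¹ * (ρ i).character g

lemma inner_charVector (i j : ι) :
    inner ℂ (charVector ρ i) (charVector ρ j) =
      (Nat.card G : ℂ)⁻¹ * ∑ g : G, (ρ j).character g * (ρ i).character g⁻¹ := by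
  have hsqrt : (√(Fintype.card G : ℝ) : ℂ) * √(Fintype.card G : ℝ) = Nat.card G := by
    rw [← Complex.ofReal_mul, Real.mul_self_sqrt (Nat.cast_nonneg _), Nat.card_eq_fintype_card]
    simp
  simp only [charVector, PiLp.inner_apply, RCLike.inner_apply, FDRep.char_inv_s17, map_mul, map_inv₀,
    Complex.conj_ofReal, mul_sum, ← hsqrt]
  refine sum_congr rfl fun g _ => ?_
  ring

lemma orthonormal_charVector (hsimple : ∀ i, Simple (ρ i))
    (hinj : ∀ i j, Nonempty (ρ i ≅ ρ j) → i = j) : Orthonormal ℂ (charVector ρ) := by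
  rw [orthonormal_iff_ite]
  intro i j
  rw [inner_charVector, FDRep.char_orthonormal]
  by_cases hij : i = j
  · subst hij
    simp [Nonempty.intro (Iso.refl (ρ i))]
  · have : ¬ Nonempty (ρ j ≅ ρ i) := fun ⟨e⟩ => hij (hinj j i ⟨e⟩).symm
    simp [hij, this]

lemma sum_norm_character_sq_mul_card_conjClass_le (hsimple : ∀ i, Simple (ρ i))
    (hinj : ∀ i j, Nonempty (ρ i ≅ ρ j) → i = j) (s : Finset ι) (h : G) :
    (∑ i ∈ s, ‖(ρ i).character h‖ ^ 2) * Nat.card (ConjClasses.mk h).carrier ≤ Fintype.card G := by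
  set C := (ConjClasses.mk h).carrier.toFinset
  have hC : (Nat.card (ConjClasses.mk h).carrier : ℝ) = #C := by
    rw [Nat.card_eq_card_toFinset]
  have hCpos : (0 : ℝ) < #C := by
    exact_mod_cast card_pos.mpr ⟨h, by simp [C, ConjClasses.mem_carrier_mk]⟩
  have hG : (0 : ℝ) < Fintype.card G := by exact_mod_cast Fintype.card_pos
  let x : EuclideanSpace ℂ G := WithLp.toLp 2 fun g => if g ∈ C then 1 else 0
  have hchar (i : ι) (g : G) (hg : g ∈ C) : (ρ i).character g = (ρ i).character h := by
    obtain ⟨b, rfl⟩ := isConj_iff.mp (ConjClasses.mk_eq_mk_iff_isConj.mp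
      (ConjClasses.mem_carrier_iff_mk_eq.mp (by simpa [C] using hg))).symm
    exact FDRep.char_conj _ _ _
  have hinner (i : ι) : ‖inner ℂ (charVector ρ i) x‖ ^ 2 =
      #C ^ 2 / Fintype.card G * ‖(ρ i).character h‖ ^ 2 := by
    have : inner ℂ (charVector ρ i) x =
        #C * starRingEnd ℂ ((√(Fintype.card G : ℝ) : ℂ)⁻¹ * (ρ i).character h) := by
      simp only [PiLp.inner_apply, RCLike.inner_apply, charVector, x, ite_mul, one_mul, zero_mul]
      rw [sum_ite_mem, univ_inter, sum_congr rfl fun g hg => by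
        rw [hchar i g hg], sum_const, nsmul_eq_mul]
    rw [this, norm_mul, RCLike.norm_conj, norm_mul, norm_inv, Complex.norm_real,
      Complex.norm_natCast, Real.norm_of_nonneg (Real.sqrt_nonneg _), mul_pow, mul_pow,
      inv_pow, Real.sq_sqrt hG.le]
    ring
  have hnorm : ‖x‖ ^ 2 = #C := by
    rw [EuclideanSpace.norm_sq_eq]
    simp [x, apply_ite]
  have hbessel := (orthonormal_charVector ρ hsimple hinj).sum_inner_products_le (s := s) x
  simp only [hinner, hnorm, ← mul_sum] at hbessel
  rw [hC]
  refine le_of_mul_le_mul_left ?_ hCpos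
  rw [div_mul_eq_mul_div, div_le_iff₀ hG] at hbessel
  linear_combination hbessel

lemma sum_finrank_sq_le_card (hsimple : ∀ i, Simple (ρ i))
    (hinj : ∀ i j, Nonempty (ρ i ≅ ρ j) → i = j) (s : Finset ι) :
    ∑ i ∈ s, (Module.finrank ℂ (ρ i) : ℝ) ^ 2 ≤ Fintype.card G := by
  have hcard : Nat.card (ConjClasses.mk (1 : G)).carrier = 1 := by
    rw [Nat.card_eq_one_iff_exists]
    refine ⟨⟨1, ConjClasses.mem_carrier_mk⟩, fun ⟨g, hg⟩ => Subtype.ext ?_⟩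
    exact isConj_one_left.mp (ConjClasses.mk_eq_mk_iff_isConj.mp
      (ConjClasses.mem_carrier_iff_mk_eq.mp hg))
  convert sum_norm_character_sq_mul_card_conjClass_le ρ hsimple hinj s 1 using 1
  rw [hcard, Nat.cast_one, mul_one]
  simp [FDRep.char_one]

lemma sum_finrank_mul_norm_character_le (hsimple : ∀ i, Simple (ρ i))
    (hinj : ∀ i j, Nonempty (ρ i ≅ ρ j) → i = j) (s : Finset ι) (h : G) :
    ∑ i ∈ s, (Module.finrank ℂ (ρ i) : ℝ) * ‖(ρ i).character h‖ ≤
      Fintype.card G * (√(Nat.card (ConjClasses.mk h).carrier))⁻¹ := by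
  have hC : (0 : ℝ) < Nat.card (ConjClasses.mk h).carrier := by
    have : Nonempty (ConjClasses.mk h).carrier := ⟨⟨h, ConjClasses.mem_carrier_mk⟩⟩
    exact_mod_cast Nat.card_pos
  calc ∑ i ∈ s, (Module.finrank ℂ (ρ i) : ℝ) * ‖(ρ i).character h‖
      ≤ √(∑ i ∈ s, (Module.finrank ℂ (ρ i) : ℝ) ^ 2) * √(∑ i ∈ s, ‖(ρ i).character h‖ ^ 2) :=
        Real.sum_mul_le_sqrt_mul_sqrt _ _ _
    _ ≤ √(Fintype.card G) * √(Fintype.card G / Nat.card (ConjClasses.mk h).carrier) := by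
        gcongr
        · exact sum_finrank_sq_le_card ρ hsimple hinj s
        · rw [le_div_iff₀ hC]
          exact sum_norm_character_sq_mul_card_conjClass_le ρ hsimple hinj s h
    _ = Fintype.card G * (√(Nat.card (ConjClasses.mk h).carrier))⁻¹ := by
        rw [Real.sqrt_div' _ hC.le, ← mul_div_assoc, Real.mul_self_sqrt (Nat.cast_nonneg _),
          div_eq_mul_inv]

theorem weakDist_le_sum_inv_sqrt_card_conjClass [Fintype ι] (hsimple : ∀ i, Simple (ρ i))
    (hinj : ∀ i j, Nonempty (ρ i ≅ ρ j) → i = j) (H : Subgroup G) :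
    weakDist ρ H ≤ ∑ h ∈ univ.filter (fun h : G => h ∈ H ∧ h ≠ 1),
      (√(Nat.card (ConjClasses.mk h).carrier))⁻¹ := by
  set T := univ.filter (fun h : G => h ∈ H ∧ h ≠ 1)
  have hG : (0 : ℝ) < Fintype.card G := by exact_mod_cast Fintype.card_pos
  calc weakDist ρ H
      = (Fintype.card G : ℝ)⁻¹ *
          ∑ i, (Module.finrank ℂ (ρ i) : ℝ) * ‖∑ h ∈ T, (ρ i).character h‖ := rfl
    _ ≤ (Fintype.card G : ℝ)⁻¹ *
          ∑ i, (Module.finrank ℂ (ρ i) : ℝ) * ∑ h ∈ T, ‖(ρ i).character h‖ := by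
        gcongr
        exact norm_sum_le _ _
    _ = (Fintype.card G : ℝ)⁻¹ *
          ∑ h ∈ T, ∑ i, (Module.finrank ℂ (ρ i) : ℝ) * ‖(ρ i).character h‖ := by
        simp only [mul_sum]
        rw [sum_comm]
    _ ≤ (Fintype.card G : ℝ)⁻¹ *
          ∑ h ∈ T, Fintype.card G * (√(Nat.card (ConjClasses.mk h).carrier))⁻¹ := by
        gcongr with h
        exact sum_finrank_mul_norm_character_le ρ hsimple hinj univ h
    _ = ∑ h ∈ T, (√(Nat.card (ConjClasses.mk h).carrier))⁻¹ := by
        rw [mul_sum]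
        exact sum_congr rfl fun h _ => inv_mul_cancel_left₀ hG.ne' _

end CharacterBessel

lemma inv_sqrt_le_rpow_neg {x a C : ℝ} (hx : 0 < x) (h : x ^ (2 * a) ≤ C) :
    (√C)⁻¹ ≤ x ^ (-a) := by
  have hpos : 0 < x ^ a := Real.rpow_pos_of_pos hx a
  have hle : x ^ a ≤ √C := by
    rw [Real.le_sqrt' hpos, ← Real.rpow_mul_natCast hx.le]
    simpa [mul_comm] using h
  rw [Real.rpow_neg hx.le]
  exact inv_anti₀ hpos hle

lemma sum_pow_le_two_mul_pow {r : ℝ} (hr0 : 0 ≤ r) (hr : r ≤ 1 / 2) {K : Finset ℕ} {m : ℕ}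
    (hK : ∀ k ∈ K, m ≤ k) : ∑ k ∈ K, r ^ k ≤ 2 * r ^ m := by
  have hinj : Set.InjOn (fun k => k - m) K := fun k hk l hl hkl => by
    have := hK k hk; have := hK l hl; simp only at hkl; omega
  have hgeom : ∑ j ∈ K.image (fun k => k - m), r ^ j ≤ 2 := by
    calc ∑ j ∈ K.image (fun k => k - m), r ^ j ≤ ∑' j, r ^ j :=
          (summable_geometric_of_lt_one hr0 (by linarith)).sum_le_tsum _ fun j _ => by positivity
      _ = (1 - r)⁻¹ := tsum_geometric_of_lt_one hr0 (by linarith)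
      _ ≤ 2 := by rw [inv_le_comm₀ (by linarith) two_pos]; linarith
  calc ∑ k ∈ K, r ^ k = r ^ m * ∑ j ∈ K.image (fun k => k - m), r ^ j := by
        rw [sum_image hinj, mul_sum]
        exact sum_congr rfl fun k hk => by rw [← pow_add, Nat.add_sub_cancel' (hK k hk)]
    _ ≤ r ^ m * 2 := by gcongr
    _ = 2 * r ^ m := mul_comm _ _

lemma sum_rpow_neg_le_of_card_fiber_le {α : Type*} (T : Finset α) (s : α → ℕ) {x b c : ℝ}
    {m : ℕ} (hx : 0 < x) (hxc : 2 ≤ x ^ c) (hm : ∀ a ∈ T, m ≤ s a)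
    (hcount : ∀ k : ℕ, (#{a ∈ T | s a = k} : ℝ) ≤ x ^ (b * k)) :
    ∑ a ∈ T, x ^ (-((c + b) * s a)) ≤ 2 * x ^ (-(c * m)) := by
  have hr : x ^ (-c) ≤ 1 / 2 := by
    rw [Real.rpow_neg hx.le, one_div]
    exact inv_anti₀ two_pos hxc
  have hpow (k : ℕ) : x ^ (-(c * k)) = (x ^ (-c)) ^ k := by
    rw [← Real.rpow_natCast, ← Real.rpow_mul hx.le, neg_mul]
  calc ∑ a ∈ T, x ^ (-((c + b) * s a))
      = ∑ k ∈ T.image s, #{a ∈ T | s a = k} * x ^ (-((c + b) * k)) := by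
        rw [sum_comp (fun k : ℕ => x ^ (-((c + b) * k)))]
        simp only [nsmul_eq_mul]
    _ ≤ ∑ k ∈ T.image s, x ^ (b * k) * x ^ (-((c + b) * k)) := by
        gcongr with k
        exact hcount k
    _ = ∑ k ∈ T.image s, (x ^ (-c)) ^ k := by
        refine sum_congr rfl fun k _ => ?_
        rw [← Real.rpow_add hx, ← hpow]
        ring_nf
    _ ≤ 2 * (x ^ (-c)) ^ m := by
        refine sum_pow_le_two_mul_pow (by positivity) hr fun k hk => ?_
        obtain ⟨a, ha, rfl⟩ := mem_image.mp hk
        exact hm a ha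
    _ = 2 * x ^ (-(c * m)) := by rw [hpow]

theorem stmt_17_general {n : ℕ} {ι : Type} [Fintype ι]
    (ρ : ι → FDRep ℂ (Equiv.Perm (Fin n))) (hρ : IsCompleteIrrepFamily ρ)
    (H : Subgroup (Equiv.Perm (Fin n)))
    (m : ℕ) (hm : IsLeast {k : ℕ | ∃ h ∈ H, h ≠ 1 ∧ h.support.card = k} m)
    (c : ℝ) (hn : 2 ≤ (n : ℝ) ^ c)
    (ha : ∀ h ∈ H, h ≠ 1 →
      (n : ℝ) ^ (2 * (c + 1 / 7) * (h.support.card : ℝ)) ≤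
        (Nat.card (ConjClasses.mk h).carrier : ℝ))
    (hb : ∀ k : ℕ,
      (Nat.card {h : Equiv.Perm (Fin n) // h ∈ H ∧ h.support.card = k} : ℝ) ≤
        (n : ℝ) ^ ((k : ℝ) / 7)) :
    weakDist ρ H ≤ 2 * (n : ℝ) ^ (-(c * (m : ℝ))) := by
  have hn0 : (0 : ℝ) < n := by
    refine Nat.cast_pos.mpr (Nat.pos_of_ne_zero fun h0 => ?_)
    rw [h0, Nat.cast_zero] at hn
    linarith [Real.zero_rpow_le_one c]
  have hsupp (h) (hh : h ∈ H ∧ h ≠ 1) : m ≤ h.support.card := hm.2 ⟨h, hh.1, hh.2, rfl⟩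
  have hcard (h) (hh : h ∈ H ∧ h ≠ 1) :
      (n : ℝ) ^ (2 * ((c + 1 / 7) * h.support.card)) ≤ Nat.card (ConjClasses.mk h).carrier := by
    rw [← mul_assoc]
    exact ha h hh.1 hh.2
  calc weakDist ρ H ≤ ∑ h ∈ _, (√(Nat.card (ConjClasses.mk h).carrier))⁻¹ :=
        weakDist_le_sum_inv_sqrt_card_conjClass ρ hρ.1 hρ.2.1 H
    _ ≤ ∑ h ∈ _, (n : ℝ) ^ (-((c + 1 / 7) * h.support.card)) :=
        sum_le_sum fun h hh => inv_sqrt_le_rpow_neg hn0 (hcard h (by simpa using hh))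
    _ ≤ 2 * (n : ℝ) ^ (-(c * m)) :=
        sum_rpow_neg_le_of_card_fiber_le _ _ hn0 hn (fun h hh => hsupp h (by simpa using hh))
          fun k => by
            rw [one_div_mul_eq_div]
            refine le_trans ?_ (hb k)
            rw [Nat.card_eq_fintype_card, Fintype.card_subtype]
            exact_mod_cast card_le_card fun h hh => by simp_all

/-- suppose `H ≤ S_n` is nontrivial with minimal degree `m`, `c > 0`
with `n^c ≥ 2`, every non-identity `h ∈ H` satisfies `|h^{S_n}| ≥ n^{2(c+1/7)·supp(h)}`,
and for every `k` the number of elements of `H` of support `k` is at most `n^{k/7}`.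
Then `D_H ≤ 2 · n^{-c·m}`. -/
theorem stmt_17 {n : ℕ} {ι : Type} [Fintype ι]
    (ρ : ι → FDRep ℂ (Equiv.Perm (Fin n))) (hρ : IsCompleteIrrepFamily ρ)
    (H : Subgroup (Equiv.Perm (Fin n))) (hH : H ≠ ⊥)
    (m : ℕ) (hm : IsLeast {k : ℕ | ∃ h ∈ H, h ≠ 1 ∧ h.support.card = k} m)
    (c : ℝ) (hc : 0 < c) (hn : 2 ≤ (n : ℝ) ^ c)
    (ha : ∀ h ∈ H, h ≠ 1 →
      (n : ℝ) ^ (2 * (c + 1 / 7) * (h.support.card : ℝ)) ≤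
        (Nat.card (ConjClasses.mk h).carrier : ℝ))
    (hb : ∀ k : ℕ,
      (Nat.card {h : Equiv.Perm (Fin n) // h ∈ H ∧ h.support.card = k} : ℝ) ≤
        (n : ℝ) ^ ((k : ℝ) / 7)) :
    weakDist ρ H ≤ 2 * (n : ℝ) ^ (-(c * (m : ℝ))) :=
  stmt_17_general ρ hρ H m hm c hn ha hb
end
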